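/- arXiv:2206.04277 — 2 statements merged into one kernel-verified Lean document; each statement's English description precedes it below -/
import Mathlib

section
/- Let r > 1/2 and v ≥ 0 be real numbers, and let (s_j)_{j≥1} and (t_j)_{j≥1} be sequences of positive reals satisfying c₁ j^{−2r} ≤ s_j ≤ c₂ j^{−2r} and c₃ s_j ≤ t_j ≤ c₄ s_j for all j ≥ 1, for some positive constants c₁, c₂, c₃, c₄. Then there exist constants 0 < c ≤ C, depending only on r, v, c₁, c₂, c₃, c₄, such that for every λ ∈ (0,1]: c · λ^{−1/(2r)} ≤ Σ_{j≥1} s_j^{1+2v} / (t_j + λ)^{1+2v} ≤ C · (1 + λ^{−1/(2r)}). -/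
/-!
Write `e = 2r`, `p = 1 + 2v` and `x = λ^{-1/e}`, so that `j ≤ x ↔ λ ≤ j^{-e}`. For `j ≤ x` we have
`λ ≤ j^{-e} ≲ s_j`, hence `t_j + λ ≲ s_j` and each term `(s_j / (t_j + λ))^p` is bounded below by a
constant; the `⌊x⌋ ≥ x / 2` such terms give the lower bound. For the upper bound every term is at
most `c₃^{-p}`, which handles the first `N = ⌈x⌉ ≤ 1 + x` terms, and the term `j` is at most
`(c₂ / λ)^p j^{-ep}`. As `ep > 1`, the integral test bounds the tail beyond `N` by
`(c₂ / λ)^p N^{1-ep} / (ep - 1)`, which is at most `c₂^p N / (ep - 1)` because `N^{-e} ≤ λ`.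
-/

open Real Set MeasureTheory

theorem tsum_nat_rpow_neg_tail_le {q : ℝ} (hq : 1 < q) {N : ℕ} (hN : 0 < N) :
    ∑' n : ℕ, ((n + N + 1 : ℕ) : ℝ) ^ (-q) ≤ (N : ℝ) ^ (1 - q) / (q - 1) := by
  have hN' : (0 : ℝ) < N := Nat.cast_pos.mpr hN
  have anti : AntitoneOn (fun x : ℝ ↦ x ^ (-q)) (Ici (N : ℝ)) := fun x hx _ _ hxy ↦
    rpow_le_rpow_of_nonpos (hN'.trans_le hx) hxy (by linarith)
  calc _ ≤ ∫ x in Ioi (N : ℝ), x ^ (-q) :=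
        anti.tsum_comp_add_le_integral N (integrableOn_Ioi_rpow_of_lt (by linarith) hN')
          fun x hx ↦ rpow_nonneg (hN'.trans hx).le _
    _ = _ := by
        rw [integral_Ioi_rpow_of_lt (by linarith) hN', neg_div, ← div_neg]
        congr 1 <;> ring_nf

theorem tsum_le_of_le_const_of_le_mul_rpow_neg {f : ℕ → ℝ} {A B q : ℝ} (hq : 1 < q) (hf : 0 ≤ f)
    (hfA : ∀ j, f j ≤ A) (hfB : ∀ j, f j ≤ B * ((j + 1 : ℕ) : ℝ) ^ (-q)) {N : ℕ} (hN : 0 < N) :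
    ∑' j, f j ≤ N * A + B * ((N : ℝ) ^ (1 - q) / (q - 1)) := by
  have hB : 0 ≤ B := by simpa using (hf 0).trans (hfB 0)
  have hdom : Summable fun j : ℕ ↦ B * ((j + 1 : ℕ) : ℝ) ^ (-q) :=
    ((summable_nat_add_iff 1).mpr (summable_nat_rpow.mpr (by linarith))).mul_left B
  have hsum : Summable f := hdom.of_nonneg_of_le hf hfB
  rw [← hsum.sum_add_tsum_nat_add N]
  gcongr ?_ + ?_
  · simpa using Finset.sum_le_sum fun j (_ : j ∈ Finset.range N) ↦ hfA j
  · calc ∑' j, f (j + N) ≤ ∑' j, B * ((j + N + 1 : ℕ) : ℝ) ^ (-q) :=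
          ((summable_nat_add_iff N).mpr hsum).tsum_le_tsum (fun j ↦ hfB (j + N))
            ((summable_nat_add_iff N).mpr hdom)
      _ ≤ _ := by
          rw [tsum_mul_left]
          exact mul_le_mul_of_nonneg_left (tsum_nat_rpow_neg_tail_le hq hN) hB

theorem nat_mul_le_tsum {f : ℕ → ℝ} {a : ℝ} {N : ℕ} (hsum : Summable f) (hf : 0 ≤ f)
    (ha : ∀ j < N, a ≤ f j) : N * a ≤ ∑' j, f j := by
  calc (N : ℝ) * a = ∑ _j ∈ Finset.range N, a := by simp
    _ ≤ ∑ j ∈ Finset.range N, f j := Finset.sum_le_sum fun j hj ↦ ha j (Finset.mem_range.mp hj)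
    _ ≤ ∑' j, f j := hsum.sum_le_tsum _ fun j _ ↦ hf j

theorem le_rpow_neg_one_div_iff {lam y e : ℝ} (hlam : 0 < lam) (hy : 0 < y) (he : 0 < e) :
    y ≤ lam ^ (-(1 / e)) ↔ lam ≤ y ^ (-e) := by
  rw [one_div, ← inv_neg]
  exact le_rpow_inv_iff_of_neg hy hlam (neg_neg_of_pos he)

theorem rpow_neg_one_div_le_iff {lam y e : ℝ} (hlam : 0 < lam) (hy : 0 < y) (he : 0 < e) :
    lam ^ (-(1 / e)) ≤ y ↔ y ^ (-e) ≤ lam := by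
  rw [one_div, ← inv_neg]
  exact rpow_inv_le_iff_of_neg hlam hy (neg_neg_of_pos he)

theorem div_rpow_mul_rpow_one_sub_mul_le {c lam e p y : ℝ} (hc : 0 ≤ c) (hlam : 0 < lam)
    (hp : 0 ≤ p) (hy : 0 < y) (hylam : y ^ (-e) ≤ lam) :
    (c / lam) ^ p * y ^ (1 - e * p) ≤ y * c ^ p := by
  have hpow : (c / lam) ^ p * y ^ (1 - e * p) = y * (c / lam * y ^ (-e)) ^ p := by
    rw [mul_rpow (by positivity) (by positivity), ← rpow_mul hy.le, rpow_sub hy, rpow_one,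
      neg_mul, rpow_neg hy.le]
    ring
  rw [hpow]
  gcongr
  calc c / lam * y ^ (-e) ≤ c / lam * lam := by gcongr
    _ = c := div_mul_cancel₀ c hlam.ne'

section

variable {e p c₁ c₂ c₃ c₄ lam : ℝ} {s t : ℕ → ℝ}

theorem rpow_div_add_nonneg (hlam : 0 < lam) (hs : ∀ j, 1 ≤ j → 0 < s j)
    (ht : ∀ j, 1 ≤ j → 0 < t j) (j : ℕ) : 0 ≤ (s (j + 1) / (t (j + 1) + lam)) ^ p :=
  rpow_nonneg
    (div_nonneg (hs _ (Nat.le_add_left 1 j)).le (by linarith [ht _ (Nat.le_add_left 1 j)])) _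

theorem rpow_div_add_le_mul_rpow_neg (hp : 0 ≤ p) (hc₂ : 0 ≤ c₂) (hlam : 0 < lam)
    (hs : ∀ j, 1 ≤ j → 0 < s j) (ht : ∀ j, 1 ≤ j → 0 < t j)
    (hs_ub : ∀ j : ℕ, 1 ≤ j → s j ≤ c₂ * (j : ℝ) ^ (-e)) (j : ℕ) :
    (s (j + 1) / (t (j + 1) + lam)) ^ p ≤ (c₂ / lam) ^ p * ((j + 1 : ℕ) : ℝ) ^ (-(e * p)) := by
  have hs' := hs _ (Nat.le_add_left 1 j)
  have ht' := ht _ (Nat.le_add_left 1 j)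
  calc (s (j + 1) / (t (j + 1) + lam)) ^ p
      ≤ (c₂ / lam * ((j + 1 : ℕ) : ℝ) ^ (-e)) ^ p := by
        gcongr
        calc s (j + 1) / (t (j + 1) + lam) ≤ s (j + 1) / lam := by gcongr; linarith
          _ ≤ _ := by rw [div_mul_eq_mul_div]; gcongr; exact hs_ub _ (Nat.le_add_left 1 j)
    _ = _ := by
        rw [mul_rpow (by positivity) (by positivity), ← rpow_mul (by positivity), neg_mul]

theorem summable_rpow_div_add (hp : 0 ≤ p) (hq : 1 < e * p) (hc₂ : 0 ≤ c₂) (hlam : 0 < lam)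
    (hs : ∀ j, 1 ≤ j → 0 < s j) (ht : ∀ j, 1 ≤ j → 0 < t j)
    (hs_ub : ∀ j : ℕ, 1 ≤ j → s j ≤ c₂ * (j : ℝ) ^ (-e)) :
    Summable fun j ↦ (s (j + 1) / (t (j + 1) + lam)) ^ p :=
  (((summable_nat_add_iff 1).mpr (summable_nat_rpow.mpr (by linarith))).mul_left _).of_nonneg_of_le
    (rpow_div_add_nonneg hlam hs ht) (rpow_div_add_le_mul_rpow_neg hp hc₂ hlam hs ht hs_ub)

theorem tsum_rpow_div_add_le (he : 0 < e) (hp : 0 ≤ p) (hq : 1 < e * p) (hc₂ : 0 ≤ c₂)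
    (hc₃ : 0 < c₃) (hlam : 0 < lam) (hs : ∀ j, 1 ≤ j → 0 < s j) (ht : ∀ j, 1 ≤ j → 0 < t j)
    (hs_ub : ∀ j : ℕ, 1 ≤ j → s j ≤ c₂ * (j : ℝ) ^ (-e))
    (ht_lb : ∀ j : ℕ, 1 ≤ j → c₃ * s j ≤ t j) :
    ∑' j, (s (j + 1) / (t (j + 1) + lam)) ^ p ≤
      ((1 / c₃) ^ p + c₂ ^ p / (e * p - 1)) * (1 + lam ^ (-(1 / e))) := by
  set x := lam ^ (-(1 / e))
  have hx0 : 0 < x := rpow_pos_of_pos hlam _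
  set N := ⌈x⌉₊
  have hN : 0 < N := Nat.ceil_pos.mpr hx0
  have hN' : (0 : ℝ) < N := Nat.cast_pos.mpr hN
  have hNx : (N : ℝ) ≤ 1 + x := by linarith [Nat.ceil_lt_add_one hx0.le]
  have hNlam : (N : ℝ) ^ (-e) ≤ lam := (rpow_neg_one_div_le_iff hlam hN' he).mp (Nat.le_ceil x)
  have hhead (j : ℕ) : (s (j + 1) / (t (j + 1) + lam)) ^ p ≤ (1 / c₃) ^ p := by
    have hs' := hs _ (Nat.le_add_left 1 j)
    have ht' := ht _ (Nat.le_add_left 1 j)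
    have hst := ht_lb _ (Nat.le_add_left 1 j)
    refine rpow_le_rpow (div_nonneg hs'.le (by linarith)) ?_ hp
    rw [div_le_div_iff₀ (by linarith) hc₃]
    linarith
  calc ∑' j, (s (j + 1) / (t (j + 1) + lam)) ^ p
      ≤ N * (1 / c₃) ^ p + (c₂ / lam) ^ p * ((N : ℝ) ^ (1 - e * p) / (e * p - 1)) :=
        tsum_le_of_le_const_of_le_mul_rpow_neg hq (rpow_div_add_nonneg hlam hs ht) hhead
          (rpow_div_add_le_mul_rpow_neg hp hc₂ hlam hs ht hs_ub) hN
    _ ≤ N * (1 / c₃) ^ p + N * c₂ ^ p / (e * p - 1) := by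
        rw [← mul_div_assoc]
        gcongr ?_ + ?_ / _
        · linarith
        · exact div_rpow_mul_rpow_one_sub_mul_le hc₂ hlam hp hN' hNlam
    _ = N * ((1 / c₃) ^ p + c₂ ^ p / (e * p - 1)) := by ring
    _ ≤ _ := by
        rw [mul_comm]
        gcongr

theorem le_tsum_rpow_div_add (he : 0 < e) (hp : 0 ≤ p) (hc₁ : 0 < c₁) (hc₄ : 0 < c₄)
    (hlam : 0 < lam) (hlam1 : lam ≤ 1) (hs : ∀ j, 1 ≤ j → 0 < s j) (ht : ∀ j, 1 ≤ j → 0 < t j)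
    (hs_lb : ∀ j : ℕ, 1 ≤ j → c₁ * (j : ℝ) ^ (-e) ≤ s j)
    (ht_ub : ∀ j : ℕ, 1 ≤ j → t j ≤ c₄ * s j)
    (hsum : Summable fun j ↦ (s (j + 1) / (t (j + 1) + lam)) ^ p) :
    (c₁ / (c₁ * c₄ + 1)) ^ p / 2 * lam ^ (-(1 / e)) ≤
      ∑' j, (s (j + 1) / (t (j + 1) + lam)) ^ p := by
  set x := lam ^ (-(1 / e))
  have hx1 : 1 ≤ x :=
    one_le_rpow_of_pos_of_le_one_of_nonpos hlam hlam1 (neg_nonpos.mpr (by positivity))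
  set N := ⌊x⌋₊
  have hN : (1 : ℝ) ≤ N := by exact_mod_cast Nat.le_floor (by exact_mod_cast hx1)
  have hxN : x ≤ 2 * N := by linarith [Nat.lt_floor_add_one x]
  have hterm : ∀ j < N, (c₁ / (c₁ * c₄ + 1)) ^ p ≤ (s (j + 1) / (t (j + 1) + lam)) ^ p := by
    intro j hj
    have hjx : ((j + 1 : ℕ) : ℝ) ≤ x := (Nat.cast_le.mpr hj).trans (Nat.floor_le (by linarith))
    have hlamj : lam ≤ ((j + 1 : ℕ) : ℝ) ^ (-e) :=
      (le_rpow_neg_one_div_iff hlam (by positivity) he).mp hjx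
    have hs' := hs_lb _ (Nat.le_add_left 1 j)
    have ht' := ht _ (Nat.le_add_left 1 j)
    have hts := ht_ub _ (Nat.le_add_left 1 j)
    refine rpow_le_rpow (by positivity) ?_ hp
    rw [div_le_div_iff₀ (by positivity) (by linarith)]
    linarith [mul_le_mul_of_nonneg_left hts hc₁.le, mul_le_mul_of_nonneg_left hlamj hc₁.le]
  calc (c₁ / (c₁ * c₄ + 1)) ^ p / 2 * x ≤ N * (c₁ / (c₁ * c₄ + 1)) ^ p := by
        nlinarith [rpow_pos_of_pos (show 0 < c₁ / (c₁ * c₄ + 1) by positivity) p]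
    _ ≤ _ := nat_mul_le_tsum hsum (rpow_div_add_nonneg hlam hs ht) hterm

end

/-- Lemma 6. If `s j ≍ j^{-2r}` and `t j ≍ s j` (for `j ≥ 1`), `r > 1/2`,
`v ≥ 0`, then there are constants `0 < c ≤ C` (depending only on `r, v, c₁, c₂, c₃, c₄`)
such that for all `λ ∈ (0,1]`:
`c λ^{-1/(2r)} ≤ Σ_{j≥1} s_j^{1+2v} / (t_j + λ)^{1+2v} ≤ C (1 + λ^{-1/(2r)})`. -/
theorem stmt_1 (r v : ℝ) (hr : 1 / 2 < r) (hv : 0 ≤ v)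
    (s t : ℕ → ℝ) (c₁ c₂ c₃ c₄ : ℝ)
    (hc₁ : 0 < c₁) (hc₂ : 0 < c₂) (hc₃ : 0 < c₃) (hc₄ : 0 < c₄)
    (hs_pos : ∀ j : ℕ, 1 ≤ j → 0 < s j) (ht_pos : ∀ j : ℕ, 1 ≤ j → 0 < t j)
    (hs_lb : ∀ j : ℕ, 1 ≤ j → c₁ * (j : ℝ) ^ (-(2 * r)) ≤ s j)
    (hs_ub : ∀ j : ℕ, 1 ≤ j → s j ≤ c₂ * (j : ℝ) ^ (-(2 * r)))
    (ht_lb : ∀ j : ℕ, 1 ≤ j → c₃ * s j ≤ t j)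
    (ht_ub : ∀ j : ℕ, 1 ≤ j → t j ≤ c₄ * s j) :
    ∃ c C : ℝ, 0 < c ∧ c ≤ C ∧ ∀ lam : ℝ, 0 < lam → lam ≤ 1 →
      c * lam ^ (-(1 / (2 * r))) ≤
        (∑' j : ℕ, s (j + 1) ^ (1 + 2 * v) / (t (j + 1) + lam) ^ (1 + 2 * v)) ∧
      (∑' j : ℕ, s (j + 1) ^ (1 + 2 * v) / (t (j + 1) + lam) ^ (1 + 2 * v)) ≤
        C * (1 + lam ^ (-(1 / (2 * r)))) := by
  have he : 0 < 2 * r := by linarith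
  have hp : 0 ≤ 1 + 2 * v := by linarith
  have hq : 1 < 2 * r * (1 + 2 * v) := by nlinarith
  set c := (c₁ / (c₁ * c₄ + 1)) ^ (1 + 2 * v) / 2
  set C := (1 / c₃) ^ (1 + 2 * v) + c₂ ^ (1 + 2 * v) / (2 * r * (1 + 2 * v) - 1)
  have hc : 0 < c := by positivity
  refine ⟨c, C + c, hc, le_add_of_nonneg_left (by have := sub_pos.mpr hq; positivity),
    fun lam hlam hlam1 ↦ ?_⟩
  have hterm (j : ℕ) : s (j + 1) ^ (1 + 2 * v) / (t (j + 1) + lam) ^ (1 + 2 * v) =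
      (s (j + 1) / (t (j + 1) + lam)) ^ (1 + 2 * v) :=
    (div_rpow (hs_pos _ (Nat.le_add_left 1 j)).le
      (by linarith [ht_pos _ (Nat.le_add_left 1 j)]) _).symm
  simp only [hterm]
  refine ⟨le_tsum_rpow_div_add he hp hc₁ hc₄ hlam hlam1 hs_pos ht_pos hs_lb ht_ub
    (summable_rpow_div_add hp hq hc₂.le hlam hs_pos ht_pos hs_ub), ?_⟩
  calc _ ≤ C * (1 + lam ^ (-(1 / (2 * r)))) :=
        tsum_rpow_div_add_le he hp hq hc₂.le hc₃ hlam hs_pos ht_pos hs_ub ht_lb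
    _ ≤ (C + c) * (1 + lam ^ (-(1 / (2 * r)))) := by
        gcongr
        exact le_add_of_nonneg_right hc.le
end

section
/- Let H be a separable real Hilbert space with its Borel σ-algebra, let μ be a probability measure on H with ∫ ‖x‖² dμ(x) < ∞, let σ > 0, and let n ≥ 1 be an integer. For γ ∈ H let ν_γ be the probability measure on H × ℝ obtained by composing μ with the Gaussian kernel x ↦ N(⟨x, γ⟩, σ²), i.e. ν_γ(A × B) = ∫_A N(⟨x, γ⟩, σ²)(B) dμ(x). Then for any β, β' ∈ H, the Kullback–Leibler divergence between the n-fold product measures satisfies KL(ν_β^{⊗n} ‖ ν_{β'}^{⊗n}) = (n/(2σ²)) · ∫ ⟨x, β − β'⟩² dμ(x). -/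
open MeasureTheory ProbabilityTheory
open scoped ENNReal NNReal Real

lemma aux_lintegral_pi_prod {α : Type*} [MeasurableSpace α] {n : ℕ}
    (Q : Measure α) [IsProbabilityMeasure Q] (f : Fin n → α → ℝ≥0∞)
    (hf : ∀ i, Measurable (f i)) :
    ∫⁻ ω : Fin n → α, ∏ i, f i (ω i) ∂(Measure.pi fun _ => Q) = ∏ i, ∫⁻ a, f i a ∂Q := by
  induction n with
  | zero => simp
  | succ n ih =>
    have h := (measurePreserving_piFinSuccAbove (fun _ : Fin (n+1) => (Q : Measure α)) 0).symm
    rw [← h.lintegral_comp_emb (MeasurableEquiv.measurableEmbedding _)]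
    simp_rw [MeasurableEquiv.piFinSuccAbove_symm_apply, Fin.insertNthEquiv,
      Fin.prod_univ_succ, Fin.insertNth_zero]
    simp only [Fin.zero_succAbove, Function.comp_def, Fin.cons_zero, Fin.cons_succ,
      Equiv.coe_fn_mk, cast_eq]
    have hm : Measurable fun (x : Fin n → α) => ∏ j : Fin n, f j.succ (x j) :=
      Finset.measurable_prod _ fun j _ => (hf j.succ).comp (measurable_pi_apply j)
    rw [lintegral_prod_mul (hf 0).aemeasurable hm.aemeasurable,
      ih (fun i => f i.succ) (fun i => hf i.succ)]

lemma aux_map_eval {α : Type*} [MeasurableSpace α] {n : ℕ} (Q : Measure α)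
    [IsProbabilityMeasure Q] (i : Fin n) :
    (Measure.pi fun _ : Fin n => Q).map (Function.eval i) = Q := by
  ext s hs
  rw [Measure.map_apply (measurable_pi_apply i) hs, Set.eval_preimage, Measure.pi_pi]
  rw [Finset.prod_eq_single i (fun j _ hj => by simp [Function.update_of_ne hj]) (by simp)]
  simp

lemma aux_integrable_id_mul_pdf (m : ℝ) {v : ℝ≥0} (hv : v ≠ 0) :
    Integrable (fun y => y * gaussianPDFReal m v y) := by
  have hvpos : (0:ℝ) < (v:ℝ) := by positivity
  have hb : (0:ℝ) < (2*(v:ℝ))⁻¹ := by positivity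
  have h1 := integrable_mul_exp_neg_mul_sq hb
  have h2 := integrable_exp_neg_mul_sq hb
  have h3 : Integrable fun u : ℝ => (u + m) * Real.exp (-(2*(v:ℝ))⁻¹ * u^2) := by
    simpa [add_mul, Pi.add_def] using h1.add (h2.const_mul m)
  have h4 := h3.comp_sub_right m
  have h5 : Integrable fun y : ℝ => y * Real.exp (-(y - m)^2 / (2*(v:ℝ))) := by
    refine h4.congr (Filter.Eventually.of_forall fun y => ?_)
    show (y - m + m) * Real.exp (-(2*(v:ℝ))⁻¹ * (y - m)^2) = _
    have h7 : y - m + m = y := by ring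
    have h8 : -(2*(v:ℝ))⁻¹ * (y - m)^2 = -(y - m)^2 / (2*(v:ℝ)) := by
      field_simp
    rw [h7, h8]
  have h6 := h5.const_mul (√(2 * Real.pi * v))⁻¹
  refine h6.congr (Filter.Eventually.of_forall fun y => ?_)
  unfold gaussianPDFReal
  ring

lemma aux_integral_zero_pdf {v : ℝ≥0} (hv : v ≠ 0) :
    ∫ y, y * gaussianPDFReal 0 v y = 0 := by
  have heven : ∀ u : ℝ, gaussianPDFReal 0 v (-u) = gaussianPDFReal 0 v u := by
    intro u; unfold gaussianPDFReal; ring_nf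
  have h := MeasureTheory.integral_neg_eq_self (fun y => y * gaussianPDFReal 0 v y) volume
  simp only [heven, neg_mul] at h
  rw [MeasureTheory.integral_neg] at h
  linarith

lemma aux_integral_id_mul_pdf (m : ℝ) {v : ℝ≥0} (hv : v ≠ 0) :
    ∫ y, y * gaussianPDFReal m v y = m := by
  have hshift := MeasureTheory.integral_add_right_eq_self (μ := volume)
    (fun y => y * gaussianPDFReal m v y) m
  rw [← hshift]
  have : ∀ u : ℝ, (u + m) * gaussianPDFReal m v (u + m) = u * gaussianPDFReal 0 v u
      + m * gaussianPDFReal 0 v u := by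
    intro u
    rw [gaussianPDFReal_add, sub_self]
    ring
  simp only [this]
  rw [MeasureTheory.integral_add (aux_integrable_id_mul_pdf 0 hv)
    ((integrable_gaussianPDFReal 0 v).const_mul m)]
  rw [aux_integral_zero_pdf hv, MeasureTheory.integral_const_mul,
    integral_gaussianPDFReal_eq_one 0 hv]
  simp

lemma aux_integrable_abs_mul_pdf (m : ℝ) {v : ℝ≥0} (hv : v ≠ 0) :
    Integrable (fun y => |y| * gaussianPDFReal m v y) := by
  refine (aux_integrable_id_mul_pdf m hv).abs.congr
    (Filter.Eventually.of_forall fun y => ?_)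
  show |y * gaussianPDFReal m v y| = _
  rw [abs_mul, abs_of_nonneg (gaussianPDFReal_nonneg _ _ _)]

lemma aux_integral_abs_mul_pdf_le (m : ℝ) {v : ℝ≥0} (hv : v ≠ 0) :
    ∫ y, |y| * gaussianPDFReal m v y ≤ |m| + ∫ u, |u| * gaussianPDFReal 0 v u := by
  have hshift := MeasureTheory.integral_add_right_eq_self (μ := volume)
    (fun y => |y| * gaussianPDFReal m v y) m
  rw [← hshift]
  have heq : ∀ u : ℝ, |u + m| * gaussianPDFReal m v (u + m)
      = |u + m| * gaussianPDFReal 0 v u := by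
    intro u; rw [gaussianPDFReal_add, sub_self]
  simp only [heq]
  have hint1 : Integrable fun u : ℝ => |u + m| * gaussianPDFReal 0 v u := by
    refine ((aux_integrable_abs_mul_pdf m hv).comp_add_right m).congr
      (Filter.Eventually.of_forall fun u => ?_)
    show |u + m| * gaussianPDFReal m v (u + m) = _
    rw [gaussianPDFReal_add, sub_self]
  have hint2 : Integrable fun u : ℝ =>
      |u| * gaussianPDFReal 0 v u + |m| * gaussianPDFReal 0 v u :=
    (aux_integrable_abs_mul_pdf 0 hv).add ((integrable_gaussianPDFReal 0 v).const_mul |m|)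
  have hle : ∀ u : ℝ, |u + m| * gaussianPDFReal 0 v u
      ≤ |u| * gaussianPDFReal 0 v u + |m| * gaussianPDFReal 0 v u := by
    intro u
    have h1 := abs_add_le u m
    have h2 := gaussianPDFReal_nonneg 0 v u
    nlinarith
  calc ∫ u, |u + m| * gaussianPDFReal 0 v u
      ≤ ∫ u, (|u| * gaussianPDFReal 0 v u + |m| * gaussianPDFReal 0 v u) :=
        integral_mono hint1 hint2 hle
    _ = |m| + ∫ u, |u| * gaussianPDFReal 0 v u := by
        rw [MeasureTheory.integral_add (aux_integrable_abs_mul_pdf 0 hv)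
          ((integrable_gaussianPDFReal 0 v).const_mul |m|),
          MeasureTheory.integral_const_mul, integral_gaussianPDFReal_eq_one 0 hv]
        ring

lemma aux_inner_integrable (m c₁ c₂ : ℝ) {v : ℝ≥0} (hv : v ≠ 0) :
    Integrable (fun y => gaussianPDFReal m v y * (c₁ * y + c₂)) := by
  have h := ((aux_integrable_id_mul_pdf m hv).const_mul c₁).add
    ((integrable_gaussianPDFReal m v).const_mul c₂)
  refine h.congr (Filter.Eventually.of_forall fun y => ?_)
  show c₁ * (y * gaussianPDFReal m v y) + c₂ * gaussianPDFReal m v y = _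
  ring

lemma aux_inner_integral (m c₁ c₂ : ℝ) {v : ℝ≥0} (hv : v ≠ 0) :
    ∫ y, gaussianPDFReal m v y * (c₁ * y + c₂) = c₁ * m + c₂ := by
  have heq : ∀ y : ℝ, gaussianPDFReal m v y * (c₁ * y + c₂)
      = c₁ * (y * gaussianPDFReal m v y) + c₂ * gaussianPDFReal m v y := fun y => by ring
  simp only [heq]
  rw [MeasureTheory.integral_add ((aux_integrable_id_mul_pdf m hv).const_mul c₁)
    ((integrable_gaussianPDFReal m v).const_mul c₂),
    MeasureTheory.integral_const_mul, MeasureTheory.integral_const_mul,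
    aux_integral_id_mul_pdf m hv, integral_gaussianPDFReal_eq_one m hv, mul_one]

lemma aux_inner_norm_bound (m c₁ c₂ : ℝ) {v : ℝ≥0} (hv : v ≠ 0) :
    ∫ y, ‖gaussianPDFReal m v y * (c₁ * y + c₂)‖
      ≤ |c₁| * (|m| + ∫ u, |u| * gaussianPDFReal 0 v u) + |c₂| := by
  have h1 : Integrable (fun y => ‖gaussianPDFReal m v y * (c₁ * y + c₂)‖) :=
    (aux_inner_integrable m c₁ c₂ hv).norm
  have h2 : Integrable (fun y => |c₁| * (|y| * gaussianPDFReal m v y)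
      + |c₂| * gaussianPDFReal m v y) :=
    ((aux_integrable_abs_mul_pdf m hv).const_mul _).add
      ((integrable_gaussianPDFReal m v).const_mul _)
  have hle : ∀ y : ℝ, ‖gaussianPDFReal m v y * (c₁ * y + c₂)‖
      ≤ |c₁| * (|y| * gaussianPDFReal m v y) + |c₂| * gaussianPDFReal m v y := by
    intro y
    have hp := gaussianPDFReal_nonneg m v y
    rw [Real.norm_eq_abs, abs_mul, abs_of_nonneg hp]
    have : |c₁ * y + c₂| ≤ |c₁| * |y| + |c₂| :=
      (abs_add_le _ _).trans (by rw [abs_mul])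
    nlinarith [abs_nonneg (c₁ * y + c₂)]
  calc ∫ y, ‖gaussianPDFReal m v y * (c₁ * y + c₂)‖
      ≤ ∫ y, (|c₁| * (|y| * gaussianPDFReal m v y) + |c₂| * gaussianPDFReal m v y) :=
        integral_mono h1 h2 hle
    _ = |c₁| * (∫ y, |y| * gaussianPDFReal m v y) + |c₂| := by
        rw [MeasureTheory.integral_add ((aux_integrable_abs_mul_pdf m hv).const_mul _)
          ((integrable_gaussianPDFReal m v).const_mul _),
          MeasureTheory.integral_const_mul, MeasureTheory.integral_const_mul,
          integral_gaussianPDFReal_eq_one m hv, mul_one]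
    _ ≤ |c₁| * (|m| + ∫ u, |u| * gaussianPDFReal 0 v u) + |c₂| := by
        have := aux_integral_abs_mul_pdf_le m hv
        have h0 := abs_nonneg c₁
        nlinarith

-- The Kullback–Leibler divergence `KL(P‖Q)`: `∫ log(dP/dQ) dP` when `P ≪ Q`, and `+∞`
-- otherwise.
open Classical in
noncomputable def klDiv {Ω : Type*} [MeasurableSpace Ω] (P Q : Measure Ω) : EReal :=
  if P ≪ Q then ((∫ ω, Real.log ((P.rnDeriv Q) ω).toReal ∂P : ℝ) : EReal) else ⊤

set_option maxHeartbeats 2000000 in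
/-- KL divergence in the Gaussian functional linear model. Let `μ` be a
probability measure on a separable real Hilbert space `H` with `∫ ‖x‖² dμ < ∞`, let `σ > 0`
and `n ≥ 1`. For `γ ∈ H` let `ν γ` be the probability measure on `H × ℝ` obtained by composing
`μ` with the Gaussian kernel `x ↦ N(⟨x, γ⟩, σ²)`, i.e.
`ν γ (A ×ˢ B) = ∫_A N(⟨x,γ⟩,σ²)(B) dμ(x)`. Then for any `β, β' ∈ H`,
`KL(ν_β^{⊗n} ‖ ν_{β'}^{⊗n}) = (n/(2σ²)) ∫ ⟨x, β − β'⟩² dμ(x)`. -/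
theorem stmt_8 {H : Type*} [NormedAddCommGroup H] [InnerProductSpace ℝ H]
    [CompleteSpace H] [SecondCountableTopology H] [MeasurableSpace H] [BorelSpace H]
    (μ : Measure H) [IsProbabilityMeasure μ]
    (hμ : Integrable (fun x => ‖x‖ ^ 2) μ)
    (σ : ℝ) (hσ : 0 < σ) (n : ℕ) (hn : 1 ≤ n)
    (ν : H → Measure (H × ℝ)) [∀ γ, IsProbabilityMeasure (ν γ)]
    (hν : ∀ γ : H, ∀ A : Set H, MeasurableSet A → ∀ B : Set ℝ, MeasurableSet B →
      ν γ (A ×ˢ B) =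
        ∫⁻ x in A, gaussianReal (inner ℝ x γ) ⟨σ ^ 2, sq_nonneg σ⟩ B ∂μ)
    (β β' : H) :
    klDiv (Measure.pi fun _ : Fin n => ν β) (Measure.pi fun _ : Fin n => ν β') =
      (((n / (2 * σ ^ 2)) * ∫ x, (inner ℝ x (β - β') : ℝ) ^ 2 ∂μ : ℝ) : EReal) := by
  classical
  set V : ℝ≥0 := ⟨σ ^ 2, sq_nonneg σ⟩ with hVdef
  have hVc : (V : ℝ) = σ ^ 2 := rfl
  have hV : V ≠ 0 := by
    intro h
    have h2 : (V : ℝ) = 0 := by rw [h]; simp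
    rw [hVc] at h2
    nlinarith
  -- continuity of the density
  have hcont : ∀ γ : H, Continuous fun z : H × ℝ =>
      gaussianPDFReal (inner ℝ z.1 γ) V z.2 := by
    intro γ
    unfold gaussianPDFReal
    have h1 : Continuous fun z : H × ℝ => (inner ℝ z.1 γ : ℝ) :=
      continuous_fst.inner continuous_const
    fun_prop
  set p : H → H × ℝ → ℝ≥0∞ := fun γ z => gaussianPDF (inner ℝ z.1 γ) V z.2 with hpdef
  have hpm : ∀ γ, Measurable (p γ) := fun γ => (hcont γ).measurable.ennreal_ofReal
  -- Step A : ν γ = (μ.prod volume).withDensity (p γ)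
  have hrect : ∀ γ : H, ∀ A : Set H, MeasurableSet A → ∀ B : Set ℝ, MeasurableSet B →
      ((μ.prod volume).withDensity (p γ)) (A ×ˢ B)
        = ∫⁻ x in A, gaussianReal (inner ℝ x γ) V B ∂μ := by
    intro γ A hA B hB
    rw [withDensity_apply _ (hA.prod hB), ← Measure.prod_restrict,
      MeasureTheory.lintegral_prod _ ((hpm γ).aemeasurable)]
    refine lintegral_congr fun x => ?_
    rw [gaussianReal_apply _ hV]
  have hrepr : ∀ γ : H, ν γ = (μ.prod volume).withDensity (p γ) := by
    intro γ
    refine MeasureTheory.ext_of_generate_finite _ generateFrom_prod.symm isPiSystem_prod ?_ ?_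
    · rintro s ⟨A, hA, B, hB, rfl⟩
      rw [hν γ A hA B hB, hrect γ A hA B hB]
    · rw [← Set.univ_prod_univ, hν γ _ MeasurableSet.univ _ MeasurableSet.univ,
        hrect γ _ MeasurableSet.univ _ MeasurableSet.univ]
  -- Step B : density ratio
  have hp_pos : ∀ γ z, 0 < p γ z := fun γ z => gaussianPDF_pos _ hV _
  have hp_top : ∀ γ z, p γ z < ⊤ := fun γ z => ENNReal.ofReal_lt_top
  set g : H × ℝ → ℝ≥0∞ := fun z => p β z / p β' z with hgdef
  have hgm : Measurable g := (hpm β).div (hpm β')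
  have hgd : (ν β').withDensity g = ν β := by
    rw [hrepr β', ← withDensity_mul _ (hpm β') hgm, hrepr β]
    congr 1
    funext z
    show p β' z * (p β z / p β' z) = p β z
    rw [mul_comm]
    exact ENNReal.div_mul_cancel (hp_pos β' z).ne' (hp_top β' z).ne
  have hac : ν β ≪ ν β' := hgd ▸ withDensity_absolutelyContinuous _ _
  have hg_ne_top : ∀ z, g z ≠ ⊤ := fun z =>
    (ENNReal.div_lt_top (hp_top β z).ne (hp_pos β' z).ne').ne
  have hg_ne_zero : ∀ z, g z ≠ 0 := fun z =>
    ENNReal.div_ne_zero.mpr ⟨(hp_pos β z).ne', (hp_top β' z).ne⟩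
  -- Step C : the product measures
  set G : (Fin n → H × ℝ) → ℝ≥0∞ := fun ω => ∏ i, g (ω i) with hGdef
  have hGm : Measurable G := Finset.measurable_prod _ fun i _ => hgm.comp (measurable_pi_apply i)
  have hPi : ((Measure.pi fun _ : Fin n => ν β').withDensity G)
      = Measure.pi fun _ : Fin n => ν β := by
    refine (Measure.pi_eq fun s hs => ?_).symm
    rw [withDensity_apply _ (MeasurableSet.univ_pi hs),
      ← lintegral_indicator (MeasurableSet.univ_pi hs)]
    have hind : ∀ ω : Fin n → H × ℝ, (Set.pi Set.univ s).indicator G ω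
        = ∏ i, (s i).indicator g (ω i) := by
      intro ω
      by_cases h : ω ∈ Set.pi Set.univ s
      · rw [Set.indicator_of_mem h]
        exact Finset.prod_congr rfl fun i _ =>
          (Set.indicator_of_mem (h i (Set.mem_univ i)) g).symm
      · rw [Set.indicator_of_notMem h]
        rw [Set.mem_univ_pi] at h
        push_neg at h
        obtain ⟨i, hi⟩ := h
        exact (Finset.prod_eq_zero (Finset.mem_univ i)
          (by rw [Set.indicator_of_notMem hi])).symm
    simp_rw [hind]
    rw [aux_lintegral_pi_prod _ _ (fun i => hgm.indicator (hs i))]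
    refine Finset.prod_congr rfl fun i _ => ?_
    rw [lintegral_indicator (hs i), ← withDensity_apply _ (hs i), hgd]
  have hacPi : (Measure.pi fun _ : Fin n => ν β) ≪ (Measure.pi fun _ : Fin n => ν β') :=
    hPi ▸ withDensity_absolutelyContinuous _ _
  have hrnPi : (Measure.pi fun _ : Fin n => ν β).rnDeriv (Measure.pi fun _ : Fin n => ν β')
      =ᵐ[Measure.pi fun _ : Fin n => ν β'] G := by
    have h := Measure.rnDeriv_withDensity (Measure.pi fun _ : Fin n => ν β') hGm
    rwa [hPi] at h
  -- the log of the density ratio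
  set φ : H × ℝ → ℝ := fun z =>
    ((z.2 - (inner ℝ z.1 β' : ℝ)) ^ 2 - (z.2 - (inner ℝ z.1 β : ℝ)) ^ 2) / (2 * σ ^ 2) with hφdef
  have hφcont : Continuous φ := by
    have h1 : Continuous fun z : H × ℝ => (inner ℝ z.1 β : ℝ) :=
      continuous_fst.inner continuous_const
    have h2 : Continuous fun z : H × ℝ => (inner ℝ z.1 β' : ℝ) :=
      continuous_fst.inner continuous_const
    rw [hφdef]
    fun_prop
  have hVpos : (0:ℝ) < (V:ℝ) := by rw [hVc]; positivity
  have hlog : ∀ z, Real.log ((g z).toReal) = φ z := by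
    intro z
    have hc : (0:ℝ) < (√(2 * Real.pi * (V:ℝ)))⁻¹ := by
      refine inv_pos.mpr (Real.sqrt_pos.mpr ?_)
      nlinarith [Real.pi_pos]
    show Real.log ((gaussianPDF (inner ℝ z.1 β) V z.2 / gaussianPDF (inner ℝ z.1 β') V z.2).toReal)
      = _
    rw [ENNReal.toReal_div,
      show gaussianPDF (inner ℝ z.1 β) V z.2
        = ENNReal.ofReal (gaussianPDFReal (inner ℝ z.1 β) V z.2) from rfl,
      show gaussianPDF (inner ℝ z.1 β') V z.2
        = ENNReal.ofReal (gaussianPDFReal (inner ℝ z.1 β') V z.2) from rfl,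
      ENNReal.toReal_ofReal (gaussianPDFReal_nonneg _ _ _),
      ENNReal.toReal_ofReal (gaussianPDFReal_nonneg _ _ _),
      Real.log_div (gaussianPDFReal_pos _ _ _ hV).ne' (gaussianPDFReal_pos _ _ _ hV).ne']
    unfold gaussianPDFReal
    rw [Real.log_mul hc.ne' (Real.exp_ne_zero _), Real.log_mul hc.ne' (Real.exp_ne_zero _),
      Real.log_exp, Real.log_exp, hVc, hφdef]
    ring
  -- auxiliary quantities
  set C : ℝ := ∫ u, |u| * gaussianPDFReal 0 V u with hCdef
  have hC0 : 0 ≤ C :=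
    integral_nonneg fun u => mul_nonneg (abs_nonneg u) (gaussianPDFReal_nonneg _ _ _)
  set q₁ : H → ℝ := fun x => (σ ^ 2)⁻¹ * (inner ℝ x (β - β') : ℝ) with hq₁
  set q₂ : H → ℝ := fun x =>
    (σ ^ 2)⁻¹ * (((inner ℝ x β' : ℝ) ^ 2 - (inner ℝ x β : ℝ) ^ 2) / 2) with hq₂
  have hσ2 : (0:ℝ) < σ ^ 2 := by positivity
  have hφeq : ∀ z : H × ℝ, φ z = q₁ z.1 * z.2 + q₂ z.1 := by
    intro z
    simp only [hφdef, hq₁, hq₂, inner_sub_right]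
    field_simp
    ring
  set F : H × ℝ → ℝ := fun z => gaussianPDFReal (inner ℝ z.1 β) V z.2 * φ z with hFdef
  have hFcont : Continuous F := (hcont β).mul hφcont
  have hFx : ∀ x : H, (fun y => F (x, y))
      = fun y => gaussianPDFReal (inner ℝ x β) V y * (q₁ x * y + q₂ x) := by
    intro x; funext y
    simp only [hFdef]
    rw [hφeq (x, y)]
  have hBint : Integrable (fun x : H => (1:ℝ) + ‖x‖ ^ 2) μ := (integrable_const 1).add hμ
  have hFint : Integrable F (μ.prod volume) := by
    refine (integrable_prod_iff hFcont.aestronglyMeasurable).mpr ⟨?_, ?_⟩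
    · refine Filter.Eventually.of_forall fun x => ?_
      rw [hFx x]
      exact aux_inner_integrable _ _ _ hV
    · set D : ℝ := (σ ^ 2)⁻¹ * (‖β - β'‖ * (‖β‖ + C) + (‖β'‖ ^ 2 + ‖β‖ ^ 2) / 2) with hD
      refine Integrable.mono' (hBint.const_mul D)
        hFcont.norm.aestronglyMeasurable.integral_prod_right'
        (Filter.Eventually.of_forall fun x => ?_)
      have hnn : 0 ≤ ∫ y, ‖F (x, y)‖ := integral_nonneg fun y => norm_nonneg _
      rw [Real.norm_eq_abs, abs_of_nonneg hnn]
      have hb : ∫ y, ‖F (x, y)‖ ≤ |q₁ x| * (|(inner ℝ x β : ℝ)| + C) + |q₂ x| := by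
        calc ∫ y, ‖F (x, y)‖
            = ∫ y, ‖gaussianPDFReal (inner ℝ x β) V y * (q₁ x * y + q₂ x)‖ := by
              refine integral_congr_ae (Filter.Eventually.of_forall fun y => ?_)
              exact congrArg Norm.norm (congrFun (hFx x) y)
          _ ≤ _ := aux_inner_norm_bound _ _ _ hV
      have e1 : |q₁ x| ≤ (σ ^ 2)⁻¹ * (‖x‖ * ‖β - β'‖) := by
        rw [hq₁]
        rw [abs_mul, abs_of_pos (inv_pos.mpr hσ2)]
        exact mul_le_mul_of_nonneg_left (abs_real_inner_le_norm _ _) (inv_pos.mpr hσ2).le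
      have e2 : |(inner ℝ x β : ℝ)| ≤ ‖x‖ * ‖β‖ := abs_real_inner_le_norm _ _
      have e3 : |q₂ x| ≤ (σ ^ 2)⁻¹ * ((‖x‖ ^ 2 * ‖β'‖ ^ 2 + ‖x‖ ^ 2 * ‖β‖ ^ 2) / 2) := by
        rw [hq₂, abs_mul, abs_of_pos (inv_pos.mpr hσ2)]
        refine mul_le_mul_of_nonneg_left ?_ (inv_pos.mpr hσ2).le
        have h1 := abs_real_inner_le_norm x β'
        have h2 := abs_real_inner_le_norm x β
        have h3 := abs_nonneg (inner ℝ x β' : ℝ)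
        have h4 := abs_nonneg (inner ℝ x β : ℝ)
        have h5 : ((inner ℝ x β' : ℝ)) ^ 2 ≤ ‖x‖ ^ 2 * ‖β'‖ ^ 2 := by
          nlinarith [sq_abs (inner ℝ x β' : ℝ)]
        have h6 : ((inner ℝ x β : ℝ)) ^ 2 ≤ ‖x‖ ^ 2 * ‖β‖ ^ 2 := by
          nlinarith [sq_abs (inner ℝ x β : ℝ)]
        have h7 : |(inner ℝ x β' : ℝ) ^ 2 - (inner ℝ x β : ℝ) ^ 2|
            ≤ ‖x‖ ^ 2 * ‖β'‖ ^ 2 + ‖x‖ ^ 2 * ‖β‖ ^ 2 := by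
          rw [abs_sub_le_iff]
          constructor
          · nlinarith [sq_nonneg (inner ℝ x β : ℝ)]
          · nlinarith [sq_nonneg (inner ℝ x β' : ℝ)]
        rw [abs_div, abs_two]
        linarith
      have hr : (0:ℝ) ≤ (σ ^ 2)⁻¹ := (inv_pos.mpr hσ2).le
      have hbd : (0:ℝ) ≤ ‖β - β'‖ := norm_nonneg _
      have hb1 : (0:ℝ) ≤ ‖β‖ := norm_nonneg _
      have hb2 : (0:ℝ) ≤ ‖β'‖ := norm_nonneg _
      have ht : (0:ℝ) ≤ ‖x‖ := norm_nonneg _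
      calc ∫ y, ‖F (x, y)‖ ≤ |q₁ x| * (|(inner ℝ x β : ℝ)| + C) + |q₂ x| := hb
        _ ≤ (σ ^ 2)⁻¹ * (‖x‖ * ‖β - β'‖) * (‖x‖ * ‖β‖ + C)
            + (σ ^ 2)⁻¹ * ((‖x‖ ^ 2 * ‖β'‖ ^ 2 + ‖x‖ ^ 2 * ‖β‖ ^ 2) / 2) := by
          refine add_le_add (mul_le_mul e1 (add_le_add e2 (le_refl C))
            (add_nonneg (abs_nonneg _) hC0) (by positivity)) e3
        _ = (σ ^ 2)⁻¹ * ((‖x‖ * ‖β - β'‖) * (‖x‖ * ‖β‖ + C)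
            + (‖x‖ ^ 2 * ‖β'‖ ^ 2 + ‖x‖ ^ 2 * ‖β‖ ^ 2) / 2) := by ring
        _ ≤ (σ ^ 2)⁻¹ * ((‖β - β'‖ * (‖β‖ + C) + (‖β'‖ ^ 2 + ‖β‖ ^ 2) / 2) * (1 + ‖x‖ ^ 2)) := by
          refine mul_le_mul_of_nonneg_left ?_ hr
          have h8 : (0:ℝ) ≤ 1 + ‖x‖ ^ 2 - ‖x‖ := by nlinarith [sq_nonneg (‖x‖ - 1)]
          nlinarith [mul_nonneg hbd hb1, mul_nonneg (mul_nonneg hbd hC0) h8,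
            sq_nonneg ‖β‖, sq_nonneg ‖β'‖, mul_nonneg (mul_nonneg hbd hb1) (sq_nonneg ‖x‖),
            mul_nonneg (mul_nonneg hb2 hb2) (sq_nonneg ‖x‖),
            mul_nonneg (mul_nonneg hb1 hb1) (sq_nonneg ‖x‖)]
        _ = D * (1 + ‖x‖ ^ 2) := by rw [hD]; ring
  -- integrability and value of the single-factor integral
  have hw : (fun z : H × ℝ => ((gaussianPDFReal (inner ℝ z.1 β) V z.2).toNNReal : ℝ≥0∞))
      = p β := rfl
  have hwm : Measurable fun z : H × ℝ => (gaussianPDFReal (inner ℝ z.1 β) V z.2).toNNReal :=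
    (hcont β).measurable.real_toNNReal
  have hKint : Integrable φ (ν β) := by
    rw [hrepr β, ← hw, integrable_withDensity_iff_integrable_smul hwm]
    refine hFint.congr (Filter.Eventually.of_forall fun z => ?_)
    show F z = _ • _
    simp only [hFdef]
    rw [NNReal.smul_def, smul_eq_mul, Real.coe_toNNReal _ (gaussianPDFReal_nonneg _ _ _)]
  have hK : ∫ z, φ z ∂(ν β) = (∫ x, (inner ℝ x (β - β') : ℝ) ^ 2 ∂μ) / (2 * σ ^ 2) := by
    rw [hrepr β, ← hw, integral_withDensity_eq_integral_smul hwm φ]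
    have heq : (fun z : H × ℝ => (gaussianPDFReal (inner ℝ z.1 β) V z.2).toNNReal • φ z) = F := by
      funext z
      show _ • _ = F z
      simp only [hFdef]
      rw [NNReal.smul_def, smul_eq_mul, Real.coe_toNNReal _ (gaussianPDFReal_nonneg _ _ _)]
    rw [heq, MeasureTheory.integral_prod _ hFint]
    have hinner : ∀ x : H, (∫ y, F (x, y)) = (inner ℝ x (β - β') : ℝ) ^ 2 / (2 * σ ^ 2) := by
      intro x
      rw [hFx x, aux_inner_integral _ _ _ hV]
      simp only [hq₁, hq₂, inner_sub_right]
      field_simp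
      ring
    simp_rw [hinner]
    rw [integral_div]
  -- assembling the Radon-Nikodym computation over the product
  rw [klDiv, if_pos hacPi]
  congr 1
  have hstep1 : ∫ ω, Real.log
        (((Measure.pi fun _ : Fin n => ν β).rnDeriv (Measure.pi fun _ : Fin n => ν β')) ω).toReal
        ∂(Measure.pi fun _ : Fin n => ν β)
      = ∫ ω, ∑ i, φ (ω i) ∂(Measure.pi fun _ : Fin n => ν β) := by
    refine integral_congr_ae ?_
    filter_upwards [hacPi.ae_eq hrnPi] with ω hω
    rw [hω]
    show Real.log (∏ i, g (ω i)).toReal = _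
    rw [ENNReal.toReal_prod, Real.log_prod (fun i _ =>
      ENNReal.toReal_ne_zero.mpr ⟨hg_ne_zero _, hg_ne_top _⟩)]
    exact Finset.sum_congr rfl fun i _ => hlog (ω i)
  rw [hstep1]
  have hIi : ∀ i : Fin n,
      Integrable (fun ω : Fin n → H × ℝ => φ (ω i)) (Measure.pi fun _ : Fin n => ν β) := by
    intro i
    have hasm : AEStronglyMeasurable φ
        ((Measure.pi fun _ : Fin n => ν β).map (Function.eval i)) :=
      hφcont.aestronglyMeasurable
    have h := integrable_map_measure hasm (measurable_pi_apply i).aemeasurable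
    rw [aux_map_eval (ν β) i] at h
    exact h.mp hKint
  rw [integral_finset_sum _ fun i _ => hIi i]
  have hIval : ∀ i : Fin n, ∫ ω, φ (ω i) ∂(Measure.pi fun _ : Fin n => ν β)
      = ∫ z, φ z ∂(ν β) := by
    intro i
    have h := integral_map (μ := Measure.pi fun _ : Fin n => ν β) (φ := Function.eval i)
      (measurable_pi_apply i).aemeasurable (f := φ) hφcont.aestronglyMeasurable
    rw [aux_map_eval (ν β) i] at h
    exact h.symm
  simp_rw [hIval]
  rw [Finset.sum_const, Finset.card_univ, Fintype.card_fin, nsmul_eq_mul, hK]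
  ring
end
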